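/- arXiv:2204.01908 — 2 statements merged into one kernel-verified Lean document; each statement's English description precedes it below -/
import Mathlib

section
/- Let sub(G_hex) denote the subdivided hexagonal grid, obtained from the infinite hexagonal grid by subdividing each edge twice (replacing every edge by a path of length three through two new vertices). Then for every integer d ≥ 11 and every vertex u of sub(G_hex), a single firefighter can contain a fire starting at u in the distance-restricted game with parameter d; that is, f_d(sub(G_hex), u) = 1 for all d ≥ 11. -/
/- Distance-restricted firefighter game (Burgess, Marcoux, Pike, arXiv:2204.01908).

At time 0 a fire breaks out at the set `F` of vertices and each firefighter is placed on
(protects) a vertex not in `F`.  At each subsequent time step the fire spreads to every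
unburnt, unprotected neighbour of a burning vertex, and then each firefighter moves to a
vertex at distance at most `d` from its current vertex in the subgraph induced by the
unburnt vertices (i.e. along a walk of length ≤ `d` through unburnt vertices).
Occupied vertices are protected forever.  The fire is contained if the burnt set
stabilizes after finitely many steps. -/

namespace Firefight

variable {V : Type*}

/-- There is a walk in `G` from `u` to `v` of length at most `d` all of whose vertices
(including the endpoints) lie in `S`. -/
def ReachWithin (G : SimpleGraph V) (S : Set V) (d : ℕ) (u v : V) : Prop :=
  ∃ p : G.Walk u v, p.length ≤ d ∧ ∀ x ∈ p.support, x ∈ S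

/-- The set of burnt vertices at each time: `F` is the set initially on fire, and
`prot t` is the set of vertices that are protected when the fire spreads at step `t+1`. -/
def burnt (G : SimpleGraph V) (F : Set V) (prot : ℕ → Set V) : ℕ → Set V
  | 0 => F
  | t + 1 => burnt G F prot t ∪ {v | v ∉ prot t ∧ ∃ w ∈ burnt G F prot t, G.Adj w v}

/-- The set of vertices protected by time `t`: all vertices occupied by some firefighter
at some time `s ≤ t`, where `pos s i` is the vertex occupied by firefighter `i` at time `s`. -/
def protOf {k : ℕ} (pos : ℕ → Fin k → V) (t : ℕ) : Set V :=
  {v | ∃ s ≤ t, ∃ i, pos s i = v}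

/-- `k` firefighters, each moving distance at most `d` per turn within the unburnt subgraph,
can contain a fire starting at `F`, the burnt set stabilizing by time `T`. -/
def CanContainIn (G : SimpleGraph V) (d k : ℕ) (F : Set V) (T : ℕ) : Prop :=
  ∃ pos : ℕ → Fin k → V,
    (∀ i, pos 0 i ∉ F) ∧
    (∀ t i, ReachWithin G (burnt G F (protOf pos) (t + 1))ᶜ d (pos t i) (pos (t + 1) i)) ∧
    ∀ t, burnt G F (protOf pos) t ⊆ burnt G F (protOf pos) T

/-- `k` firefighters, each moving distance at most `d` per turn within the unburnt subgraph,
can contain a fire starting at `F`. -/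
def CanContain (G : SimpleGraph V) (d k : ℕ) (F : Set V) : Prop :=
  ∃ T, CanContainIn G d k F T

/-- The distance-restricted firefighter number `f_d(G,u)`: the least number of firefighters
that can contain a fire starting at `u` in the distance-`d` game. -/
noncomputable def fdNum (G : SimpleGraph V) (d : ℕ) (u : V) : ℕ :=
  sInf {k | CanContain G d k {u}}

/-- The infinite square grid: vertex set `ℤ × ℤ`, with `(a,b)` adjacent to `(c,d)`
iff `|a-c| + |b-d| = 1`. -/
def sqGrid : SimpleGraph (ℤ × ℤ) :=
  SimpleGraph.fromRel (fun p q => |p.1 - q.1| + |p.2 - q.2| = 1)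

/-- The infinite hexagonal grid: vertex set `ℤ × ℤ`, with `(x,y)` adjacent to `(x±1,y)`
for all `x, y`, and `(x,y)` adjacent to `(x,y+1)` exactly when `x + y` is even. -/
def hexGrid : SimpleGraph (ℤ × ℤ) :=
  SimpleGraph.fromRel (fun p q =>
    (p.2 = q.2 ∧ |p.1 - q.1| = 1) ∨ (p.1 = q.1 ∧ Even (p.1 + p.2) ∧ q.2 = p.2 + 1))

/-- The vertex set of a concrete plane model of the twice-subdivided hexagonal grid
`sub(G_hex)`: each vertex `(x,y)` of the hexagonal grid becomes `(3x,3y)`; each horizontal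
edge `(x,y)–(x+1,y)` is replaced by the path `(3x,3y)–(3x+1,3y)–(3x+2,3y)–(3x+3,3y)`; each
vertical edge `(x,y)–(x,y+1)` (present exactly when `x+y` is even) is replaced by the path
`(3x,3y)–(3x,3y+1)–(3x,3y+2)–(3x,3y+3)`.  Thus the vertices are: all points whose second
coordinate is a multiple of `3`, together with the interior points of the vertical paths,
namely points `(a,b)` with `3 ∣ a` and `Even (a/3 + ⌊b/3⌋)`. -/
def subHexVerts : Set (ℤ × ℤ) :=
  {p | (3 ∣ p.2) ∨ (3 ∣ p.1 ∧ Even (p.1 / 3 + Int.fdiv p.2 3))}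

/-- The twice-subdivided hexagonal grid `sub(G_hex)` (every edge of the hexagonal grid
replaced by a path of length three), realized as the subgraph of the square grid induced
by `subHexVerts`. -/
def subHexGrid : SimpleGraph subHexVerts := sqGrid.induce subHexVerts

/-!
Fire spreading from `u` needs at least `arrivalBound u p` steps to reach `p`: the ℓ¹-distance
and the height potential `phi` both change by at most one along an edge, and `phi` grows twice
as fast as the height, since the fire needs six steps to climb three units from one row of
hexagons to the next. Translating by a period of the grid, the fire starts in a small `cell`
near the origin. A single firefighter then walks once around a large `box`, moving at most 8 per
turn through vertices the fire cannot have reached, and occupies each vertex of `sub(G_hex)` on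
the boundary of the box before the fire can get there; the sides visited late are placed far
from the fire. The fire therefore stays in the finite box, so it is contained. Without
firefighters it runs along a row forever.
-/

namespace ReachWithin

variable {W : Type*} {G : SimpleGraph V} {S S' : Set V} {m n : ℕ} {u v w : V}

theorem refl (hv : v ∈ S) : ReachWithin G S 0 v v :=
  ⟨.nil, le_rfl, by simpa using hv⟩

theorem of_adj (h : G.Adj v w) (hv : v ∈ S) (hw : w ∈ S) : ReachWithin G S 1 v w :=
  ⟨h.toWalk, by simp, by simp [hv, hw]⟩

theorem trans (h₁ : ReachWithin G S m u v) (h₂ : ReachWithin G S n v w) :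
    ReachWithin G S (m + n) u w := by
  obtain ⟨p, hp, hpS⟩ := h₁
  obtain ⟨q, hq, hqS⟩ := h₂
  refine ⟨p.append q, by rw [SimpleGraph.Walk.length_append]; omega, fun x hx => ?_⟩
  rcases (SimpleGraph.Walk.mem_support_append_iff _ _).1 hx with hx | hx
  exacts [hpS x hx, hqS x hx]

theorem symm (h : ReachWithin G S n v w) : ReachWithin G S n w v := by
  obtain ⟨p, hp, hpS⟩ := h
  exact ⟨p.reverse, by simpa using hp, by simpa using hpS⟩

theorem mono (h : ReachWithin G S m v w) (hS : S ⊆ S') (hmn : m ≤ n) :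
    ReachWithin G S' n v w := by
  obtain ⟨p, hp, hpS⟩ := h
  exact ⟨p, hp.trans hmn, fun x hx => hS (hpS x hx)⟩

theorem reachable (h : ReachWithin G S n v w) : G.Reachable v w :=
  let ⟨p, _⟩ := h; ⟨p⟩

theorem map {G' : SimpleGraph W} (φ : G ≃g G') (h : ReachWithin G S n v w) :
    ReachWithin G' (φ '' S) n (φ v) (φ w) := by
  obtain ⟨p, hp, hpS⟩ := h
  refine ⟨p.map φ.toHom, by simpa using hp, ?_⟩
  simp only [SimpleGraph.Walk.support_map, List.mem_map]
  rintro _ ⟨x, hx, rfl⟩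
  exact ⟨x, hpS x hx, rfl⟩

end ReachWithin

section Burning

variable {W : Type*} {G : SimpleGraph V} {F : Set V} {prot : ℕ → Set V}

theorem burnt_mono : Monotone (burnt G F prot) :=
  monotone_nat_of_le_succ fun _ _ hv => Or.inl hv

theorem protOf_mono {k : ℕ} (pos : ℕ → Fin k → V) : Monotone (protOf pos) :=
  fun _ _ hst _ ⟨s, hs, i, hi⟩ => ⟨s, hs.trans hst, i, hi⟩

theorem protOf_fin_zero (pos : ℕ → Fin 0 → V) (t : ℕ) : protOf pos t = ∅ :=
  Set.eq_empty_of_forall_notMem fun _ ⟨_, _, i, _⟩ => i.elim0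

theorem le_of_mem_burnt (f : V → ℤ) (hf : ∀ v w, G.Adj v w → f w ≤ f v + 1)
    (hF : ∀ v ∈ F, f v ≤ 0) {t : ℕ} {v : V} (hv : v ∈ burnt G F prot t) : f v ≤ t := by
  induction t generalizing v with
  | zero => exact hF v hv
  | succ t ih =>
    rcases hv with hv | ⟨-, w, hw, hwv⟩
    · exact (ih hv).trans (by omega)
    · have := hf w v hwv
      have := ih hw
      push_cast
      omega

theorem burnt_subset_of_fence (f : V → ℤ) (hf : ∀ v w, G.Adj v w → f w ≤ f v + 1)
    (hF : ∀ v ∈ F, f v ≤ 0) (hprot : Monotone prot) {B : Set V} (hFB : F ⊆ B)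
    (hfence : ∀ w ∈ B, ∀ v, G.Adj w v → v ∉ B → ∃ s : ℕ, (s : ℤ) < f v ∧ v ∈ prot s)
    (t : ℕ) : burnt G F prot t ⊆ B := by
  induction t with
  | zero => exact hFB
  | succ t ih =>
    rintro v (hv | ⟨hvt, w, hw, hwv⟩)
    · exact ih hv
    by_contra hvB
    obtain ⟨s, hs, hvs⟩ := hfence w (ih hw) v hwv hvB
    have := hf w v hwv
    have := le_of_mem_burnt f hf hF hw
    exact hvt (hprot (show s ≤ t by omega) hvs)

theorem exists_burnt_subset_of_finite {B : Set V} (hB : B.Finite)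
    (h : ∀ t, burnt G F prot t ⊆ B) : ∃ T, ∀ t, burnt G F prot t ⊆ burnt G F prot T := by
  obtain ⟨_, ⟨T, rfl⟩, hT⟩ := (hB.finite_subsets.subset (Set.range_subset_iff.2 h)).exists_maximal
    (Set.range_nonempty _)
  exact ⟨T, fun t => (burnt_mono (le_max_left t T)).trans
    (hT ⟨_, rfl⟩ (burnt_mono (le_max_right t T)))⟩

theorem mem_burnt_of_walk (hprot : ∀ t, prot t = ∅) {v w : V} (p : G.Walk v w) {t : ℕ}
    (hv : v ∈ burnt G F prot t) : w ∈ burnt G F prot (t + p.length) := by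
  induction p generalizing t with
  | nil => exact hv
  | cons h p ih =>
    rw [SimpleGraph.Walk.length_cons, ← add_assoc, add_right_comm]
    exact ih (Or.inr ⟨by simp [hprot], _, hv, h⟩)

theorem not_canContain_zero_of_unbounded {d : ℕ} {u : V} (f : V → ℤ)
    (hf : ∀ v w, G.Adj v w → f w ≤ f v + 1)
    (hunb : ∀ n : ℕ, ∃ v, G.Reachable u v ∧ f u + n < f v) : ¬ CanContain G d 0 {u} := by
  rintro ⟨T, pos, -, -, hT⟩
  obtain ⟨v, ⟨p⟩, hv⟩ := hunb T
  have hvT := hT _ (mem_burnt_of_walk (protOf_fin_zero pos) p (t := 0) rfl)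
  have := le_of_mem_burnt (fun x => f x - f u) (fun x y hxy => by linarith [hf x y hxy])
    (by simp) hvT
  omega

theorem fdNum_eq_one {d : ℕ} {u : V} (h₁ : CanContain G d 1 {u}) (h₀ : ¬ CanContain G d 0 {u}) :
    fdNum G d u = 1 := by
  refine le_antisymm (Nat.sInf_le h₁) (Nat.one_le_iff_ne_zero.2 fun h => ?_)
  rcases Nat.sInf_eq_zero.1 h with h | h
  exacts [h₀ h, h.subset h₁]

theorem burnt_map {G' : SimpleGraph W} (φ : G ≃g G') (t : ℕ) :
    burnt G' (φ '' F) (fun s => φ '' prot s) t = φ '' burnt G F prot t := by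
  induction t with
  | zero => rfl
  | succ t ih =>
    simp only [burnt, ih, Set.image_union]
    congr 1
    ext v
    constructor
    · rintro ⟨hv, _, ⟨w, hw, rfl⟩, hwv⟩
      refine ⟨φ.symm v, ⟨fun h => hv ⟨_, h, by simp⟩, w, hw, ?_⟩, by simp⟩
      simpa using φ.symm.map_adj_iff.2 hwv
    · rintro ⟨v, ⟨hv, w, hw, hwv⟩, rfl⟩
      exact ⟨fun ⟨x, hx, he⟩ => hv (φ.injective he ▸ hx), φ w, ⟨w, hw, rfl⟩, φ.map_adj_iff.2 hwv⟩

theorem CanContain.map {G' : SimpleGraph W} (φ : G ≃g G') {d k : ℕ} (h : CanContain G d k F) :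
    CanContain G' d k (φ '' F) := by
  obtain ⟨T, pos, h₀, hmove, hT⟩ := h
  have hprot : protOf (fun t i => φ (pos t i)) = fun t => φ '' protOf pos t := by
    ext t v
    simp only [protOf, Set.mem_image, Set.mem_ofPred_eq]
    constructor
    · rintro ⟨s, hs, i, rfl⟩; exact ⟨_, ⟨s, hs, i, rfl⟩, rfl⟩
    · rintro ⟨_, ⟨s, hs, i, rfl⟩, rfl⟩; exact ⟨s, hs, i, rfl⟩
  have hburnt : ∀ t, burnt G' (φ '' F) (protOf fun t i => φ (pos t i)) t =
      φ '' burnt G F (protOf pos) t := fun t => by rw [hprot, burnt_map]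
  refine ⟨T, fun t i => φ (pos t i), fun i ⟨x, hx, he⟩ => h₀ i (φ.injective he ▸ hx),
    fun t i => ?_, fun t => ?_⟩
  · rw [hburnt, ← Set.image_compl_eq φ.bijective]
    exact (hmove t i).map φ
  · rw [hburnt, hburnt]
    exact Set.image_mono (hT t)

end Burning

section Grid

open Set

theorem mem_subHexVerts {p : ℤ × ℤ} :
    p ∈ subHexVerts ↔ p.2 % 3 = 0 ∨ (p.1 % 3 = 0 ∧ (p.1 / 3 + p.2 / 3) % 2 = 0) := by
  change 3 ∣ p.2 ∨ (3 ∣ p.1 ∧ Even (p.1 / 3 + Int.fdiv p.2 3)) ↔ _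
  rw [Int.fdiv_eq_ediv_of_nonneg _ (by norm_num), Int.even_iff]
  omega

theorem sqGrid_adj_iff {p q : ℤ × ℤ} :
    sqGrid.Adj p q ↔ (p.1 - q.1).natAbs + (p.2 - q.2).natAbs = 1 := by
  rw [sqGrid, SimpleGraph.fromRel_adj, Int.abs_eq_natAbs, Int.abs_eq_natAbs, Int.abs_eq_natAbs,
    Int.abs_eq_natAbs, ne_eq, Prod.ext_iff]
  omega

theorem subHexGrid_adj {p q : subHexVerts} : subHexGrid.Adj p q ↔ sqGrid.Adj p.1 q.1 :=
  Iff.rfl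

def subHexPeriods : Set (ℤ × ℤ) := {o | o.2 % 3 = 0 ∧ (o.1 - o.2) % 6 = 0}

theorem add_mem_subHexVerts_iff {o p : ℤ × ℤ} (ho : o ∈ subHexPeriods) :
    p + o ∈ subHexVerts ↔ p ∈ subHexVerts := by
  simp only [subHexPeriods, mem_ofPred_eq] at ho
  simp only [mem_subHexVerts, Prod.fst_add, Prod.snd_add]
  omega

def subHexTranslate (o : ℤ × ℤ) (ho : o ∈ subHexPeriods) : subHexGrid ≃g subHexGrid where
  toFun p := ⟨p.1 + o, (add_mem_subHexVerts_iff ho).2 p.2⟩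
  invFun p := ⟨p.1 - o, (add_mem_subHexVerts_iff ho).1 (by simp)⟩
  left_inv p := by simp
  right_inv p := by simp
  map_rel_iff' := by
    intro p q
    simp only [Equiv.coe_fn_mk, subHexGrid_adj, sqGrid_adj_iff, Prod.fst_add, Prod.snd_add,
      add_sub_add_right_eq_sub]

def cell : Set (ℤ × ℤ) := Icc 0 5 ×ˢ Icc 0 2

theorem exists_translate_mem_cell (u : subHexVerts) :
    ∃ o, ∃ ho : o ∈ subHexPeriods, ∃ u₀ : subHexVerts,
      u₀.1 ∈ cell ∧ subHexTranslate o ho u₀ = u := by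
  obtain ⟨⟨a, b⟩, hu⟩ := u
  have ho : (3 * (b / 3) + 6 * ((a - 3 * (b / 3)) / 6), 3 * (b / 3)) ∈ subHexPeriods := by
    simp only [subHexPeriods, mem_ofPred_eq]; omega
  refine ⟨_, ho, (subHexTranslate _ ho).symm ⟨(a, b), hu⟩, ?_, by simp⟩
  change (a - _, b - _) ∈ cell
  simp only [cell, mem_prod, mem_Icc]
  omega

end Grid

section GridWalks

open Set

def GridReach (S : Set (ℤ × ℤ)) (n : ℕ) (p q : ℤ × ℤ) : Prop :=
  ∃ (hp : p ∈ subHexVerts) (hq : q ∈ subHexVerts),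
    ReachWithin subHexGrid (Subtype.val ⁻¹' S) n ⟨p, hp⟩ ⟨q, hq⟩

namespace GridReach

variable {S S' : Set (ℤ × ℤ)} {m n : ℕ} {p q r : ℤ × ℤ}

theorem trans (h₁ : GridReach S m p q) (h₂ : GridReach S n q r) : GridReach S (m + n) p r :=
  let ⟨hp, _, h₁⟩ := h₁; let ⟨_, hr, h₂⟩ := h₂; ⟨hp, hr, h₁.trans h₂⟩

theorem symm (h : GridReach S n p q) : GridReach S n q p :=
  let ⟨hp, hq, h⟩ := h; ⟨hq, hp, h.symm⟩

theorem mono (h : GridReach S m p q) (hS : S ⊆ S') (hmn : m ≤ n) : GridReach S' n p q :=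
  let ⟨hp, hq, h⟩ := h; ⟨hp, hq, h.mono (preimage_mono hS) hmn⟩

theorem along (f : ℤ → ℤ × ℤ)
    (hf : ∀ z, ((f z).1 - (f (z + 1)).1).natAbs + ((f z).2 - (f (z + 1)).2).natAbs = 1)
    {z z' : ℤ} (hm : (z' - z).natAbs ≤ m) (hS : ∀ w ∈ uIcc z z', f w ∈ subHexVerts ∩ S) :
    GridReach S m (f z) (f z') := by
  have key (z : ℤ) (k : ℕ) (h : ∀ w, z ≤ w → w ≤ z + k → f w ∈ subHexVerts ∩ S) :
      GridReach S k (f z) (f (z + k)) := by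
    induction k with
    | zero =>
      have := h z le_rfl (by simp)
      simpa using ⟨this.1, this.1, ReachWithin.refl (G := subHexGrid) this.2⟩
    | succ k ih =>
      have hk := h (z + k) (by omega) (by omega)
      have hk' := h (z + (k + 1 : ℕ)) (by omega) le_rfl
      obtain ⟨hp, hq, hpk⟩ := ih fun w h₁ h₂ => h w h₁ (by omega)
      refine ⟨hp, hk'.1, hpk.trans (ReachWithin.of_adj ?_ hk.2 hk'.2)⟩
      rw [subHexGrid_adj, sqGrid_adj_iff]
      simpa [add_assoc] using hf (z + k)
  rcases le_total z z' with h | h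
  · obtain ⟨k, rfl⟩ : ∃ k : ℕ, z' = z + k := ⟨(z' - z).toNat, by omega⟩
    exact (key z k fun w h₁ h₂ => hS w (uIcc_of_le h ▸ ⟨h₁, h₂⟩)).mono le_rfl (by omega)
  · obtain ⟨k, rfl⟩ : ∃ k : ℕ, z = z' + k := ⟨(z - z').toNat, by omega⟩
    exact (key z' k fun w h₁ h₂ => hS w (uIcc_of_ge h ▸ ⟨h₁, h₂⟩)).symm.mono le_rfl (by omega)

theorem row {x x' y : ℤ} (hy : y % 3 = 0) (hm : (x' - x).natAbs ≤ m)
    (hS : uIcc x x' ×ˢ {y} ⊆ S) : GridReach S m (x, y) (x', y) :=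
  along (fun z => (z, y)) (fun z => by simp) hm fun w hw =>
    ⟨mem_subHexVerts.2 (Or.inl hy), hS ⟨hw, rfl⟩⟩

theorem column {x y z z' : ℤ} (hx : x % 3 = 0) (hy : y % 3 = 0) (hxy : (x / 3 + y / 3) % 2 = 0)
    (hz : uIcc z z' ⊆ Icc y (y + 3)) (hm : (z' - z).natAbs ≤ m)
    (hS : {x} ×ˢ uIcc z z' ⊆ S) : GridReach S m (x, z) (x, z') :=
  along (fun w => (x, w)) (fun w => by simp) hm fun w hw =>
    ⟨mem_subHexVerts.2 (by have := hz hw; simp only [mem_Icc] at this; omega), hS ⟨rfl, hw⟩⟩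

theorem corner {x x' y y₀ z : ℤ} (hx' : x' % 3 = 0) (hy₀ : y₀ % 3 = 0)
    (hxy₀ : (x' / 3 + y₀ / 3) % 2 = 0) (hy : y = y₀ ∨ y = y₀ + 3) (hz : z ∈ Icc y₀ (y₀ + 3))
    (hm : (x' - x).natAbs + (z - y).natAbs ≤ m) (hS : uIcc x x' ×ˢ uIcc y z ⊆ S) :
    GridReach S m (x, y) (x', z) :=
  have hrow : GridReach S (x' - x).natAbs (x, y) (x', y) :=
    row (by omega) le_rfl <| hS.trans' <|
      prod_mono subset_rfl <| singleton_subset_iff.2 left_mem_uIcc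
  have hcol : GridReach S (z - y).natAbs (x', y) (x', z) :=
    column hx' hy₀ hxy₀ (uIcc_subset_Icc (by simp only [mem_Icc]; omega) hz) le_rfl <|
      hS.trans' <| prod_mono (singleton_subset_iff.2 right_mem_uIcc) subset_rfl
  (hrow.trans hcol).mono subset_rfl hm

theorem cross_row {x y : ℤ} (hx : x % 3 = 1) (hy : y % 3 = 0)
    (hS : uIcc (x - 1) (x + 2) ×ˢ uIcc y (y + 3) ⊆ S) : GridReach S 7 (x, y) (x, y + 3) := by
  have hcorner : ∀ {x' r}, x' ∈ uIcc (x - 1) (x + 2) → r ∈ uIcc y (y + 3) → (r = y ∨ r = y + 3) →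
      x' % 3 = 0 → (x' / 3 + y / 3) % 2 = 0 →
      GridReach S ((x' - x).natAbs + (y + 3 - r).natAbs) (x, r) (x', y + 3) :=
    fun hx' hr hry h₁ h₂ => corner h₁ hy h₂ hry (by simp only [mem_Icc]; omega) le_rfl <|
      hS.trans' <| prod_mono (uIcc_subset_uIcc (by simp only [mem_uIcc]; omega) hx')
        (uIcc_subset_uIcc hr right_mem_uIcc)
  -- the connector joining the two rows sits at `x - 1` or at `x + 2`, by parity
  rcases Int.emod_two_eq_zero_or_one ((x - 1) / 3 + y / 3) with h | h
  · have hx' : x - 1 ∈ uIcc (x - 1) (x + 2) := left_mem_uIcc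
    exact ((hcorner hx' left_mem_uIcc (.inl rfl) (by omega) h).trans
      (hcorner hx' right_mem_uIcc (.inr rfl) (by omega) h).symm).mono subset_rfl (by omega)
  · have hx' : x + 2 ∈ uIcc (x - 1) (x + 2) := right_mem_uIcc
    exact ((hcorner hx' left_mem_uIcc (.inl rfl) (by omega) (by omega)).trans
      (hcorner hx' right_mem_uIcc (.inr rfl) (by omega) (by omega)).symm).mono subset_rfl (by omega)

theorem shift_connector {x y : ℤ} (hx : x % 3 = 0) (hy : y % 3 = 0)
    (hxy : (x / 3 + y / 3) % 2 = 0) (hS : uIcc x (x + 6) ×ˢ uIcc (y + 2) (y + 3) ⊆ S) :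
    GridReach S 8 (x, y + 2) (x + 6, y + 2) := by
  have hcorner : ∀ {x'}, x' ∈ uIcc x (x + 6) → x' % 3 = 0 → (x' / 3 + y / 3) % 2 = 0 →
      GridReach S ((x' - x).natAbs + 1) (x, y + 3) (x', y + 2) :=
    fun hx' h₁ h₂ => corner h₁ hy h₂ (.inr rfl) (by simp only [mem_Icc]; omega) (by omega) <|
      hS.trans' <| prod_mono (uIcc_subset_uIcc left_mem_uIcc hx') (by rw [uIcc_comm])
  exact ((hcorner left_mem_uIcc hx hxy).symm.trans
    (hcorner right_mem_uIcc (by omega) (by omega))).mono subset_rfl (by omega)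

end GridReach

end GridWalks

section Potential

/-- On the row `y = 3k` the connectors leading upwards start at the points `x ≡ y (mod 6)`, and
`phi` is `6k` minus the distance to the nearest of them; at height `3k + r` on a connector it is
`6k + r`. It changes by at most one along an edge but by six from one row to the next. -/
def phi (p : ℤ × ℤ) : ℤ :=
  if p.2 % 3 = 0 then 6 * (p.2 / 3) - min ((p.1 - p.2) % 6) (6 - (p.1 - p.2) % 6)
  else 6 * (p.2 / 3) + p.2 % 3

theorem phi_bounds (p : ℤ × ℤ) : 2 * p.2 - 3 ≤ phi p ∧ phi p ≤ 2 * p.2 := by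
  unfold phi; split <;> omega

theorem natAbs_phi_sub_le_one {p q : ℤ × ℤ} (hp : p ∈ subHexVerts) (hq : q ∈ subHexVerts)
    (h : sqGrid.Adj p q) : (phi p - phi q).natAbs ≤ 1 := by
  rw [mem_subHexVerts] at hp hq
  rw [sqGrid_adj_iff] at h
  obtain ⟨x, y⟩ := p
  obtain ⟨x', y'⟩ := q
  simp only at hp hq h
  rcases (by omega : (x' = x + 1 ∨ x' = x - 1) ∧ y' = y ∨ x' = x ∧ (y' = y + 1 ∨ y' = y - 1))
    with ⟨rfl | rfl, rfl⟩ | ⟨rfl, rfl | rfl⟩ <;> unfold phi <;> dsimp only <;> split_ifs <;> omega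

def l1Dist (p q : ℤ × ℤ) : ℕ := (p.1 - q.1).natAbs + (p.2 - q.2).natAbs

theorem l1Dist_triangle (p q r : ℤ × ℤ) : l1Dist p r ≤ l1Dist p q + l1Dist q r := by
  unfold l1Dist
  omega

def arrivalBound (u p : ℤ × ℤ) : ℤ := max (l1Dist p u : ℤ) (phi p - phi u).natAbs

theorem arrivalBound_le_add_one {u p q : ℤ × ℤ} (hp : p ∈ subHexVerts) (hq : q ∈ subHexVerts)
    (h : sqGrid.Adj p q) : arrivalBound u q ≤ arrivalBound u p + 1 := by
  have := natAbs_phi_sub_le_one hp hq h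
  rw [sqGrid_adj_iff] at h
  unfold arrivalBound l1Dist
  omega

theorem arrivalBound_sub_le (o u p : ℤ × ℤ) :
    arrivalBound o p - arrivalBound o u ≤ arrivalBound u p := by
  have := l1Dist_triangle p u o
  unfold arrivalBound
  omega

theorem arrivalBound_zero_le_of_mem_cell {u : ℤ × ℤ} (hu : u ∈ cell) : arrivalBound 0 u ≤ 7 := by
  obtain ⟨⟨ha₀, ha₁⟩, hb₀, hb₁⟩ := hu
  have := phi_bounds u
  have : phi 0 = 0 := rfl
  unfold arrivalBound l1Dist
  simp only [Prod.fst_zero, Prod.snd_zero]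
  omega

theorem arrivalBound_le_of_mem_burnt {u : subHexVerts} {prot : ℕ → Set subHexVerts} {t : ℕ}
    {v : subHexVerts} (hv : v ∈ burnt subHexGrid {u} prot t) : arrivalBound u v ≤ t :=
  le_of_mem_burnt (fun v : subHexVerts => arrivalBound u v)
    (fun v w h => arrivalBound_le_add_one v.2 w.2 h) (by simp [arrivalBound, l1Dist]) hv

theorem le_arrivalBound_zero (p : ℤ × ℤ) :
    (p.1.natAbs + p.2.natAbs : ℤ) ≤ arrivalBound 0 p ∧
      2 * (p.2.natAbs : ℤ) - 3 ≤ arrivalBound 0 p := by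
  have := phi_bounds p
  have : phi 0 = 0 := rfl
  unfold arrivalBound l1Dist
  simp only [Prod.fst_zero, Prod.snd_zero, sub_zero]
  omega

theorem uIcc_prod_uIcc_subset_arrivalBound {c x₀ x₁ y₀ y₁ : ℤ}
    (h : ∀ x y, min x₀ x₁ ≤ x → x ≤ max x₀ x₁ → min y₀ y₁ ≤ y → y ≤ max y₀ y₁ →
      c < x.natAbs + y.natAbs ∨ c + 3 < 2 * y.natAbs) :
    Set.uIcc x₀ x₁ ×ˢ Set.uIcc y₀ y₁ ⊆ {p | c < arrivalBound 0 p} := by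
  rintro ⟨x, y⟩ ⟨hx, hy⟩
  rw [Set.mem_uIcc] at hx hy
  have := le_arrivalBound_zero (x, y)
  have := h x y (by omega) (by omega) (by omega) (by omega)
  change c < arrivalBound 0 (x, y)
  omega

end Potential

section Frame

open Set

/-- The firefighter walks once anticlockwise around the boundary of `box`, occupying at each
step the next vertex of `sub(G_hex)` on it: the rows cross the sides `x = 661` and `x = -1799`,
the connectors cross the sides `y = 902` and `y = -1798`. -/
def frame (t : ℕ) : ℤ × ℤ :=
  if t ≤ 899 then (661, 3 * t - 1797)
  else if t ≤ 1309 then (6060 - 6 * t, 902)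
  else if t ≤ 2209 then (-1799, 4830 - 3 * t)
  else if t ≤ 2619 then (6 * t - 15054, -1798)
  else (660, -1798)

def box : Set (ℤ × ℤ) := Ioo (-1799) 661 ×ˢ Ioo (-1798) 902

theorem frame_mem (t : ℕ) : frame t ∈ subHexVerts := by
  rw [mem_subHexVerts]
  unfold frame
  split_ifs <;> dsimp only <;> omega

theorem frame_reach_of_vertical_side {t : ℕ} (ht : t < 899 ∨ 1310 ≤ t ∧ t < 2209) :
    GridReach {p | (t : ℤ) + 8 < arrivalBound 0 p} 8 (frame t) (frame (t + 1)) := by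
  rcases ht with h | h
  · obtain ⟨e₀, e₁⟩ : frame t = (661, 3 * (t : ℤ) - 1797) ∧
        frame (t + 1) = (661, 3 * (t : ℤ) - 1797 + 3) := by
      constructor <;> unfold frame <;> split_ifs <;> ext <;> dsimp only <;> omega
    rw [e₀, e₁]
    exact (GridReach.cross_row (by omega) (by omega) (uIcc_prod_uIcc_subset_arrivalBound
      fun x y _ _ _ _ => by omega)).mono subset_rfl (by omega)
  · obtain ⟨e₀, e₁⟩ : frame t = (-1799, 4827 - 3 * (t : ℤ) + 3) ∧
        frame (t + 1) = (-1799, 4827 - 3 * (t : ℤ)) := by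
      constructor <;> unfold frame <;> split_ifs <;> ext <;> dsimp only <;> omega
    rw [e₀, e₁]
    exact (GridReach.cross_row (by omega) (by omega) (uIcc_prod_uIcc_subset_arrivalBound
      fun x y _ _ _ _ => by omega)).symm.mono subset_rfl (by omega)

theorem frame_reach_of_horizontal_side {t : ℕ} (ht : 900 ≤ t ∧ t < 1309 ∨ 2210 ≤ t ∧ t < 2619) :
    GridReach {p | (t : ℤ) + 8 < arrivalBound 0 p} 8 (frame t) (frame (t + 1)) := by
  rcases ht with h | h
  · obtain ⟨e₀, e₁⟩ : frame t = (6054 - 6 * (t : ℤ) + 6, 900 + 2) ∧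
        frame (t + 1) = (6054 - 6 * (t : ℤ), 900 + 2) := by
      constructor <;> unfold frame <;> split_ifs <;> ext <;> dsimp only <;> omega
    rw [e₀, e₁]
    exact (GridReach.shift_connector (by omega) (by omega) (by omega)
      (uIcc_prod_uIcc_subset_arrivalBound fun x y _ _ _ _ => by omega)).symm
  · obtain ⟨e₀, e₁⟩ : frame t = (6 * (t : ℤ) - 15054, -1800 + 2) ∧
        frame (t + 1) = (6 * (t : ℤ) - 15054 + 6, -1800 + 2) := by
      constructor <;> unfold frame <;> split_ifs <;> ext <;> dsimp only <;> omega
    rw [e₀, e₁]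
    exact GridReach.shift_connector (by omega) (by omega) (by omega)
      (uIcc_prod_uIcc_subset_arrivalBound fun x y _ _ _ _ => by omega)

theorem frame_reach {t : ℕ} (ht : t < 2619) :
    GridReach {p | (t : ℤ) + 8 < arrivalBound 0 p} 8 (frame t) (frame (t + 1)) := by
  rcases (by omega : t < 899 ∨ 1310 ≤ t ∧ t < 2209 ∨ 900 ≤ t ∧ t < 1309 ∨ 2210 ≤ t ∨
    t = 899 ∨ t = 1309 ∨ t = 2209) with h | h | h | h | rfl | rfl | rfl
  · exact frame_reach_of_vertical_side (.inl h)
  · exact frame_reach_of_vertical_side (.inr h)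
  · exact frame_reach_of_horizontal_side (.inl h)
  · exact frame_reach_of_horizontal_side (.inr ⟨h, ht⟩)
  · rw [show frame 899 = (661, 900) by norm_num [frame],
      show frame 900 = (660, 902) by norm_num [frame]]
    exact GridReach.corner (by norm_num) (by norm_num) (by norm_num) (.inl rfl) (by norm_num)
      (by norm_num) (uIcc_prod_uIcc_subset_arrivalBound fun x y _ _ _ _ => by omega)
  · rw [show frame 1309 = (-1794, 902) by norm_num [frame],
      show frame 1310 = (-1799, 900) by norm_num [frame]]
    exact (GridReach.corner (by norm_num) (by norm_num) (by norm_num) (.inl rfl) (by norm_num)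
      (by norm_num) (uIcc_prod_uIcc_subset_arrivalBound fun x y _ _ _ _ => by omega)).symm
  · rw [show frame 2209 = (-1799, -1797) by norm_num [frame],
      show frame 2210 = (-1794, -1798) by norm_num [frame]]
    exact GridReach.corner (y₀ := -1800) (by norm_num) (by norm_num) (by norm_num) (.inr rfl)
      (by norm_num) (by norm_num) (uIcc_prod_uIcc_subset_arrivalBound fun x y _ _ _ _ => by omega)

theorem exists_frame_eq_of_adj_box {v w : ℤ × ℤ} (hv : v ∈ subHexVerts) (hvB : v ∉ box)
    (hw : w ∈ box) (hwv : sqGrid.Adj w v) : ∃ s, frame s = v ∧ (s : ℤ) + 7 < arrivalBound 0 v := by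
  obtain ⟨x, y⟩ := v
  obtain ⟨x', y'⟩ := w
  have := le_arrivalBound_zero (x, y)
  rw [mem_subHexVerts] at hv
  rw [sqGrid_adj_iff] at hwv
  simp only [box, mem_prod, mem_Ioo] at hvB hw hv hwv this
  -- invert `frame` side by side
  obtain ⟨s, hs⟩ : ∃ s : ℕ, (s : ℤ) = if x = 661 then (y + 1797) / 3 else if y = 902 then
      (6060 - x) / 6 else if x = -1799 then (4830 - y) / 3 else (x + 15054) / 6 :=
    ⟨_, Int.toNat_of_nonneg (by split_ifs <;> omega)⟩
  refine ⟨s, ?_, by split_ifs at hs <;> omega⟩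
  unfold frame
  split_ifs at hs ⊢ <;> ext <;> dsimp only <;> omega

theorem frame_of_ge {t : ℕ} (ht : 2619 ≤ t) : frame t = (660, -1798) := by
  unfold frame
  split_ifs <;> ext <;> dsimp only <;> omega

def framePos (t : ℕ) (_ : Fin 1) : subHexVerts := ⟨frame t, frame_mem t⟩

theorem burnt_framePos_subset_box {u : subHexVerts} (hu : u.1 ∈ cell) (t : ℕ) :
    burnt subHexGrid {u} (protOf framePos) t ⊆ Subtype.val ⁻¹' box := by
  refine burnt_subset_of_fence (fun v : subHexVerts => arrivalBound u v)
    (fun v w h => arrivalBound_le_add_one v.2 w.2 h) (by simp [arrivalBound, l1Dist])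
    (protOf_mono framePos) ?_ (fun w hw v hwv hv => ?_) t
  · rintro _ rfl
    obtain ⟨⟨_, _⟩, _, _⟩ := hu
    exact ⟨⟨by omega, by omega⟩, by omega, by omega⟩
  · obtain ⟨s, hs, hsv⟩ := exists_frame_eq_of_adj_box v.2 hv hw hwv
    refine ⟨s, ?_, s, le_rfl, 0, Subtype.ext hs⟩
    linarith [arrivalBound_sub_le 0 u v, arrivalBound_zero_le_of_mem_cell hu]

theorem canContain_one_of_mem_cell {d : ℕ} (hd : 8 ≤ d) {u : subHexVerts} (hu : u.1 ∈ cell) :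
    CanContain subHexGrid d 1 {u} := by
  obtain ⟨T, hT⟩ := exists_burnt_subset_of_finite
    (((finite_Ioo _ _).prod (finite_Ioo _ _)).preimage Subtype.val_injective.injOn)
    (burnt_framePos_subset_box hu)
  refine ⟨T, framePos, fun _ h => ?_, fun t i => ?_, hT⟩
  · rw [← h] at hu
    norm_num [framePos, frame, cell] at hu
  rcases lt_or_ge t 2619 with ht | ht
  · obtain ⟨_, _, h⟩ := frame_reach ht
    refine h.mono (fun v hv hvt => ?_) hd
    have := arrivalBound_le_of_mem_burnt hvt
    have := arrivalBound_sub_le 0 u v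
    have := arrivalBound_zero_le_of_mem_cell hu
    change (t : ℤ) + 8 < arrivalBound 0 v at hv
    omega
  · have : framePos (t + 1) i = framePos t i :=
      Subtype.ext <| by simp only [framePos, frame_of_ge ht, frame_of_ge (ht.trans t.le_succ)]
    rw [this]
    refine (ReachWithin.refl fun hb => ?_).mono subset_rfl (Nat.zero_le d)
    simpa [framePos, frame_of_ge ht, box] using burnt_framePos_subset_box hu _ hb

end Frame

theorem subHex_not_canContain_zero (d : ℕ) (u : subHexVerts) : ¬ CanContain subHexGrid d 0 {u} := by
  obtain ⟨⟨a, b⟩, hu⟩ := u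
  refine not_canContain_zero_of_unbounded (fun v => v.1.1) (fun v w h => ?_) fun n => ?_
  · have := sqGrid_adj_iff.1 (subHexGrid_adj.1 h)
    omega
  have hu' := mem_subHexVerts.1 hu
  have hcol : GridReach Set.univ 2 (a, b) (a, 3 * (b / 3)) :=
    GridReach.along (fun w => (a, w)) (fun w => by simp) (by omega) fun w hw =>
      ⟨mem_subHexVerts.2 (by rw [Set.mem_uIcc] at hw; dsimp only at hu' ⊢; omega), trivial⟩
  have hrow : GridReach Set.univ (n + 1) (a, 3 * (b / 3)) (a + (n + 1), 3 * (b / 3)) :=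
    GridReach.row (by omega) (by omega) (Set.subset_univ _)
  obtain ⟨_, hv, h⟩ := hcol.trans hrow
  exact ⟨⟨_, hv⟩, h.reachable, by dsimp only; omega⟩

/-- For every integer `d ≥ 11` and every vertex `u` of the twice-subdivided hexagonal
grid, a single firefighter can contain a fire starting at `u` in the distance-restricted
game with parameter `d`: `f_d(sub(G_hex), u) = 1` for all `d ≥ 11`. -/
theorem subdivided_hex_one_firefighter :
    ∀ d : ℕ, 11 ≤ d → ∀ u : subHexVerts, fdNum subHexGrid d u = 1 := by
  intro d hd u
  refine fdNum_eq_one ?_ (subHex_not_canContain_zero d u)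
  obtain ⟨o, ho, u₀, hu₀, rfl⟩ := exists_translate_mem_cell u
  simpa using (canContain_one_of_mem_cell (by omega) hu₀).map (subHexTranslate o ho)

end Firefight
end

section
/- For every integer n ≥ 3, in the distance-restricted firefighter game with parameter d = 1 on the Cartesian product of the two-way infinite path and the n-cycle, two firefighters can contain a fire starting at any vertex. -/
/- Distance-restricted firefighter game (Burgess, Marcoux, Pike, arXiv:2204.01908).

At time 0 a fire breaks out at the set `F` of vertices and each firefighter is placed on
(protects) a vertex not in `F`.  At each subsequent time step the fire spreads to every
unburnt, unprotected neighbour of a burning vertex, and then each firefighter moves to a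
vertex at distance at most `d` from its current vertex in the subgraph induced by the
unburnt vertices (i.e. along a walk of length ≤ `d` through unburnt vertices).
Occupied vertices are protected forever.  The fire is contained if the burnt set
stabilizes after finitely many steps. -/

namespace Firefight

variable {V : Type*}

/-- The two-way infinite path: vertex set `ℤ` with `i` adjacent to `i+1`. -/
def intPath : SimpleGraph ℤ :=
  SimpleGraph.fromRel (fun i j => j = i + 1)

/-- The cycle on `m` vertices (for `m ≥ 3`): vertex set `ZMod m`, `i` adjacent to `i ± 1`. -/
def cycleGraph (m : ℕ) : SimpleGraph (ZMod m) :=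
  SimpleGraph.fromRel (fun i j => j = i + 1)

/-! Two firefighters start in the columns `a + n` and `a - n` of a fire at `(a, b)` and walk
once around the cycle, completing both columns at time `n - 1`. The fire needs `n` steps to
reach either column, so it stays in the finite strip between them and therefore stops. -/

theorem _root_.Monotone.exists_forall_le_of_finite_range {α : Type*} [Preorder α] {f : ℕ → α}
    (hf : Monotone f) (hfin : (Set.range f).Finite) : ∃ T, ∀ t, f t ≤ f T := by
  obtain ⟨T, -, hT⟩ :=
    Set.Finite.exists_maximalFor' f Set.univ (by rwa [Set.image_univ]) Set.univ_nonempty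
  refine ⟨T, fun t => ?_⟩
  rcases le_total t T with htT | hTt
  · exact hf htT
  · exact hT trivial (hf hTt)

theorem reachWithin_of_adj {G : SimpleGraph V} {S : Set V} {d : ℕ} {u v : V} (hd : 1 ≤ d)
    (huv : G.Adj u v) (hu : u ∈ S) (hv : v ∈ S) : ReachWithin G S d u v := by
  refine ⟨.cons huv .nil, by simpa using hd, ?_⟩
  simp [hu, hv]

theorem monotone_burnt (G : SimpleGraph V) (F : Set V) (prot : ℕ → Set V) :
    Monotone (burnt G F prot) :=
  monotone_nat_of_le_succ fun _ => Set.subset_union_left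

theorem canContain_of_burnt_subset {G : SimpleGraph V} {d k : ℕ} {F S : Set V}
    (hS : S.Finite) (pos : ℕ → Fin k → V) (hpos : ∀ i, pos 0 i ∉ F)
    (hmove : ∀ t i, ReachWithin G (burnt G F (protOf pos) (t + 1))ᶜ d (pos t i) (pos (t + 1) i))
    (hburnt : ∀ t, burnt G F (protOf pos) t ⊆ S) : CanContain G d k F := by
  have hrange : (Set.range (burnt G F (protOf pos))).Finite :=
    hS.finite_subsets.subset (Set.range_subset_iff.mpr hburnt)
  obtain ⟨T, hT⟩ := (monotone_burnt G F _).exists_forall_le_of_finite_range hrange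
  exact ⟨T, pos, hpos, hmove, hT⟩

theorem intPath_adj {i j : ℤ} : intPath.Adj i j ↔ j = i + 1 ∨ i = j + 1 := by
  rw [intPath, SimpleGraph.fromRel_adj]
  omega

theorem cycleGraph_adj_add_one {n : ℕ} (hn : n ≠ 1) (z : ZMod n) :
    (cycleGraph n).Adj z (z + 1) := by
  have : Nontrivial (ZMod n) := ZMod.nontrivial_iff.mpr hn
  rw [cycleGraph, SimpleGraph.fromRel_adj]
  exact ⟨by simp, Or.inl rfl⟩

theorem finite_strip {W : Type*} [Finite W] (a : ℤ) (m : ℕ) :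
    {v : ℤ × W | (v.1 - a).natAbs < m}.Finite :=
  ((Set.finite_Ioo (a - m) (a + m)).prod Set.finite_univ).subset fun v hv => by
    replace hv : (v.1 - a).natAbs < m := hv
    exact ⟨Set.mem_Ioo.mpr ⟨by omega, by omega⟩, trivial⟩

theorem burnt_subset_strip {W : Type*} {H : SimpleGraph W} {a : ℤ} {m : ℕ} (hm : 0 < m)
    {F : Set (ℤ × W)} (hF : ∀ v ∈ F, v.1 = a) {prot : ℕ → Set (ℤ × W)}
    (hwall : ∀ t, m ≤ t + 1 → ∀ y, (a + m, y) ∈ prot t ∧ (a - m, y) ∈ prot t) (t : ℕ) :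
    burnt (intPath.boxProd H) F prot t ⊆
      {v | (v.1 - a).natAbs ≤ t ∧ (v.1 - a).natAbs < m} := by
  induction t with
  | zero =>
    intro v hv
    have := hF v hv
    exact ⟨by omega, by omega⟩
  | succ t ih =>
    rintro v (hv | ⟨hvp, w, hw, hwv⟩)
    · obtain ⟨hvt, hvm⟩ := ih hv
      exact ⟨by omega, hvm⟩
    obtain ⟨hwt, hwm⟩ := ih hw
    rcases SimpleGraph.boxProd_adj.mp hwv with ⟨hx, -⟩ | ⟨-, hx⟩
    · have hstep := intPath_adj.mp hx
      refine ⟨by omega, ?_⟩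
      by_contra hvm
      apply hvp
      obtain ⟨hplus, hminus⟩ := hwall t (by omega) v.2
      rcases (by omega : v.1 = a + m ∨ v.1 = a - m) with hv1 | hv1
      · rwa [← hv1] at hplus
      · rwa [← hv1] at hminus
    · rw [hx] at hwt hwm
      exact ⟨by omega, hwm⟩

def guards (n : ℕ) (a : ℤ) (b : ZMod n) : ℕ → Fin 2 → ℤ × ZMod n :=
  fun t i => (a + ![(n : ℤ), -n] i, b + t)

theorem guards_wall_mem_protOf {n : ℕ} [NeZero n] (a : ℤ) (b : ZMod n) {t : ℕ}
    (ht : n ≤ t + 1) (y : ZMod n) :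
    (a + n, y) ∈ protOf (guards n a b) t ∧ (a - n, y) ∈ protOf (guards n a b) t := by
  have hs : (y - b).val ≤ t := by have := ZMod.val_lt (y - b); omega
  exact ⟨⟨_, hs, 0, by simp [guards]⟩, ⟨_, hs, 1, by simp [guards, sub_eq_add_neg]⟩⟩

theorem natAbs_guards_fst_sub (n : ℕ) (a : ℤ) (b : ZMod n) (t : ℕ) (i : Fin 2) :
    ((guards n a b t i).1 - a).natAbs = n := by
  fin_cases i <;> simp [guards]

theorem guards_adj_succ {n : ℕ} (hn : n ≠ 1) (a : ℤ) (b : ZMod n) (t : ℕ) (i : Fin 2) :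
    (intPath.boxProd (cycleGraph n)).Adj (guards n a b t i) (guards n a b (t + 1) i) := by
  refine SimpleGraph.boxProd_adj.mpr (.inr ⟨?_, rfl⟩)
  simpa [guards, add_assoc] using cycleGraph_adj_add_one hn (b + (t : ZMod n))

/-- For every integer `n ≥ 3`, in the distance-restricted game with `d = 1` on the
Cartesian product of the two-way infinite path and the `n`-cycle, two firefighters can
contain a fire starting at any vertex. -/
theorem path_times_cycle_d1_two_suffice :
    ∀ n : ℕ, 3 ≤ n → ∀ u : ℤ × ZMod n,
      CanContain (intPath.boxProd (cycleGraph n)) 1 2 {u} := by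
  rintro n hn ⟨a, b⟩
  have : NeZero n := ⟨by omega⟩
  have hstrip := burnt_subset_strip (H := cycleGraph n) (a := a) (m := n) (by omega)
    (F := {(a, b)}) (by simp) (fun _ ht => guards_wall_mem_protOf a b ht)
  have hguard_unburnt (s t : ℕ) (i : Fin 2) : guards n a b s i ∉
      burnt (intPath.boxProd (cycleGraph n)) {(a, b)} (protOf (guards n a b)) t :=
    fun hv => (natAbs_guards_fst_sub n a b s i).not_lt (hstrip t hv).2
  refine canContain_of_burnt_subset (finite_strip a n) (guards n a b) (hguard_unburnt 0 0)
    (fun t i => reachWithin_of_adj le_rfl (guards_adj_succ (by omega) a b t i) ?_ ?_)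
    (fun t v hv => (hstrip t hv).2)
  all_goals exact hguard_unburnt _ (t + 1) i

end Firefight
end
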